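/- arXiv:1005.3397 — 3 statements merged into one kernel-verified Lean document; each statement's English description precedes it below -/
import Mathlib

section
/- Let a > 0 and let p_a(y, y', t) = (e^{-t/4} / √(4πt)) · (y·y')^{1/2} · ( e^{-(log(y/y'))^2/(4t)} − e^{-(log(y·y'/a^2))^2/(4t)} ) for y, y' ≥ a and t > 0. Then p_a solves the heat equation of the operator −y^2 d^2/dy^2: for all y > a, y' > a and t > 0, ∂p_a/∂t (y, y', t) = y^2 · ∂^2 p_a/∂y^2 (y, y', t). -/
/-- The Dirichlet heat kernel of the operator `−y² d²/dy²` on `L²([a,∞), y⁻²dy)`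
with Dirichlet boundary condition at `y = a`. -/
noncomputable def cuspHeatKernel (a y y' t : ℝ) : ℝ :=
  (Real.exp (-t / 4) / Real.sqrt (4 * Real.pi * t)) * Real.sqrt (y * y') *
    (Real.exp (-(Real.log (y / y')) ^ 2 / (4 * t)) -
      Real.exp (-(Real.log (y * y' / a ^ 2)) ^ 2 / (4 * t)))

/-!
In the variable `x = log y`, the operator `y² d²/dy²` acting on `√y · h(log y)` becomes
`d²/dx² - 1/4` acting on `h`. Writing `p_a(y, y', t) = √y · h(x, t)`, the profile `h` is
`√y' e^{-t/4}` times the difference of the Euclidean heat kernel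
`G(u, t) = e^{-u²/(4t)} / √(4πt)` centred at `log y'` and at its mirror image
`2 log a - log y'`. Since `∂ₜG = ∂ᵤ²G`, the factor `e^{-t/4}` makes `h` solve
`∂ₜh = ∂ₓ²h - h/4`, which is the heat equation for `p_a` after conjugating back.
-/

open Real Filter Topology

noncomputable def heatKernel (u t : ℝ) : ℝ :=
  exp (-u ^ 2 / (4 * t)) / √(4 * π * t)

lemma hasDerivAt_heatKernel_space (u t : ℝ) :
    HasDerivAt (heatKernel · t) (-u / (2 * t) * heatKernel u t) u :=
  ((((hasDerivAt_pow 2 u).neg.div_const (4 * t)).exp).div_const (√(4 * π * t))).congr_deriv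
    (by simp only [heatKernel, Pi.neg_apply]; ring)

lemma differentiable_heatKernel_space (t : ℝ) : Differentiable ℝ (heatKernel · t) :=
  fun u => (hasDerivAt_heatKernel_space u t).differentiableAt

lemma deriv_heatKernel_space (t : ℝ) :
    deriv (heatKernel · t) = fun u => -u / (2 * t) * heatKernel u t :=
  funext fun u => (hasDerivAt_heatKernel_space u t).deriv

lemma hasDerivAt_deriv_heatKernel_space (u t : ℝ) :
    HasDerivAt (deriv (heatKernel · t))
      ((u ^ 2 / (4 * t ^ 2) - 1 / (2 * t)) * heatKernel u t) u := by
  rw [deriv_heatKernel_space]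
  exact (((hasDerivAt_neg u).div_const (2 * t)).mul (hasDerivAt_heatKernel_space u t)).congr_deriv
    (by ring)

/-- The value agrees with `hasDerivAt_deriv_heatKernel_space`: this is `∂ₜG = ∂ᵤ²G`. -/
lemma hasDerivAt_heatKernel_time (u : ℝ) {t : ℝ} (ht : 0 < t) :
    HasDerivAt (heatKernel u) ((u ^ 2 / (4 * t ^ 2) - 1 / (2 * t)) * heatKernel u t) t := by
  have hexp := (((hasDerivAt_id t).const_mul 4).inv (by positivity)).const_mul (-u ^ 2) |>.exp
  have hsqrt := ((hasDerivAt_id t).const_mul (4 * π)).sqrt (by positivity)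
  refine (hexp.div hsqrt (by positivity)).congr_deriv ?_
  have hs : √(4 * π * t) ^ 2 = 4 * π * t := sq_sqrt (by positivity)
  have : √(4 * π * t) ≠ 0 := by positivity
  simp only [heatKernel, id, Pi.inv_apply]
  generalize √(4 * π * t) = R at *
  field_simp
  linear_combination 4 * t * hs

lemma hasDerivAt_sqrt_mul_comp_log {h h' : ℝ → ℝ} {z : ℝ} (hz : 0 < z)
    (hh : HasDerivAt h (h' (log z)) (log z)) :
    HasDerivAt (fun z => √z * h (log z)) ((h (log z) / 2 + h' (log z)) / √z) z := by
  refine ((hasDerivAt_sqrt hz.ne').mul (hh.comp z (hasDerivAt_log hz.ne'))).congr_deriv ?_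
  have hs : √z ^ 2 = z := sq_sqrt hz.le
  have : √z ≠ 0 := by positivity
  simp only [Function.comp_apply]
  generalize √z = s at *
  subst hs
  field_simp

lemma sq_mul_deriv_deriv_sqrt_mul_comp_log {h : ℝ → ℝ} (hh : Differentiable ℝ h) {y : ℝ}
    (hy : 0 < y) (hh' : DifferentiableAt ℝ (deriv h) (log y)) :
    y ^ 2 * deriv (deriv fun z => √z * h (log z)) y =
      √y * (deriv (deriv h) (log y) - h (log y) / 4) := by
  have hfirst : deriv (fun z => √z * h (log z)) =ᶠ[𝓝 y]
      fun z => (h (log z) / 2 + deriv h (log z)) / √z := by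
    filter_upwards [Ioi_mem_nhds hy] with z hz
    exact (hasDerivAt_sqrt_mul_comp_log hz (hh _).hasDerivAt).deriv
  have hg : HasDerivAt (fun z => h (log z) / 2 + deriv h (log z))
      ((deriv h (log y) / 2 + deriv (deriv h) (log y)) / y) y := by
    have hlog := hasDerivAt_log hy.ne'
    refine ((((hh _).hasDerivAt.comp y hlog).div_const 2).add
      (hh'.hasDerivAt.comp y hlog)).congr_deriv ?_
    field_simp
  have hquot : HasDerivAt (fun z => (h (log z) / 2 + deriv h (log z)) / √z) _ y :=
    hg.div (hasDerivAt_sqrt hy.ne') (by positivity)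
  rw [hfirst.deriv_eq, hquot.deriv]
  have hs : √y ^ 2 = y := sq_sqrt hy.le
  have : √y ≠ 0 := by positivity
  generalize √y = s at *
  subst hs
  field_simp
  ring

noncomputable def cuspProfile (a y' t x : ℝ) : ℝ :=
  √y' * exp (-t / 4) * (heatKernel (x - log y') t - heatKernel (x - (2 * log a - log y')) t)

section cuspProfile

variable (a y' : ℝ)

lemma hasDerivAt_cuspProfile (t x : ℝ) :
    HasDerivAt (cuspProfile a y' t) (√y' * exp (-t / 4) *
      (deriv (heatKernel · t) (x - log y') - deriv (heatKernel · t) (x - (2 * log a - log y')))) x :=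
  have hG (c : ℝ) := (differentiable_heatKernel_space t (x - c)).hasDerivAt.comp_sub_const x c
  ((hG _).sub (hG _)).const_mul _

lemma differentiable_cuspProfile (t : ℝ) : Differentiable ℝ (cuspProfile a y' t) :=
  fun x => (hasDerivAt_cuspProfile a y' t x).differentiableAt

lemma deriv_cuspProfile (t : ℝ) :
    deriv (cuspProfile a y' t) = fun x => √y' * exp (-t / 4) *
      (deriv (heatKernel · t) (x - log y') - deriv (heatKernel · t) (x - (2 * log a - log y'))) :=
  funext fun x => (hasDerivAt_cuspProfile a y' t x).deriv

lemma hasDerivAt_deriv_cuspProfile (t x : ℝ) :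
    HasDerivAt (deriv (cuspProfile a y' t)) (√y' * exp (-t / 4) *
      (((x - log y') ^ 2 / (4 * t ^ 2) - 1 / (2 * t)) * heatKernel (x - log y') t -
        ((x - (2 * log a - log y')) ^ 2 / (4 * t ^ 2) - 1 / (2 * t)) *
          heatKernel (x - (2 * log a - log y')) t)) x := by
  have hG (c : ℝ) := (hasDerivAt_deriv_heatKernel_space (x - c) t).comp_sub_const x c
  rw [deriv_cuspProfile]
  exact ((hG _).sub (hG _)).const_mul _

lemma cuspProfile_heat_equation (x : ℝ) {t : ℝ} (ht : 0 < t) :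
    deriv (fun s => cuspProfile a y' s x) t =
      deriv (deriv (cuspProfile a y' t)) x - cuspProfile a y' t x / 4 := by
  have htime : HasDerivAt (fun s => cuspProfile a y' s x) _ t :=
    ((((hasDerivAt_id t).neg.div_const 4).exp).const_mul √y').mul
      ((hasDerivAt_heatKernel_time _ ht).sub (hasDerivAt_heatKernel_time _ ht))
  rw [htime.deriv, (hasDerivAt_deriv_cuspProfile a y' t x).deriv]
  simp only [cuspProfile, id, Pi.neg_apply]
  ring

end cuspProfile

lemma cuspHeatKernel_eq_sqrt_mul_cuspProfile {a y y' : ℝ} (ha : a ≠ 0) (hy : 0 < y) (hy' : 0 < y')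
    (t : ℝ) : cuspHeatKernel a y y' t = √y * cuspProfile a y' t (log y) := by
  have hlog₁ : log (y / y') = log y - log y' := log_div hy.ne' hy'.ne'
  have hlog₂ : log (y * y' / a ^ 2) = log y - (2 * log a - log y') := by
    rw [log_div (by positivity) (by positivity), log_mul hy.ne' hy'.ne', log_pow]
    push_cast
    ring
  simp only [cuspHeatKernel, cuspProfile, heatKernel, hlog₁, hlog₂, sqrt_mul hy.le]
  ring

/-- `p_a` solves the heat equation of the operator `−y² d²/dy²`:
`∂p_a/∂t (y, y', t) = y² ∂²p_a/∂y² (y, y', t)` for `y, y' > a`, `t > 0`. -/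
theorem cuspHeatKernel_heat_equation (a : ℝ) (ha : 0 < a) :
    ∀ y y' t : ℝ, a < y → a < y' → 0 < t →
      deriv (fun s : ℝ => cuspHeatKernel a y y' s) t =
        y ^ 2 * deriv (deriv (fun z : ℝ => cuspHeatKernel a z y' t)) y := by
  intro y y' t hy hy' ht
  have hy₀ : 0 < y := ha.trans hy
  have hy'₀ : 0 < y' := ha.trans hy'
  have htime : (fun s => cuspHeatKernel a y y' s) = fun s => √y * cuspProfile a y' s (log y) :=
    funext (cuspHeatKernel_eq_sqrt_mul_cuspProfile ha.ne' hy₀ hy'₀)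
  have hspace : (fun z => cuspHeatKernel a z y' t) =ᶠ[𝓝 y]
      fun z => √z * cuspProfile a y' t (log z) := by
    filter_upwards [Ioi_mem_nhds hy₀] with z hz
    exact cuspHeatKernel_eq_sqrt_mul_cuspProfile ha.ne' hz hy'₀ t
  rw [htime, deriv_const_mul_field, hspace.deriv.deriv_eq,
    sq_mul_deriv_deriv_sqrt_mul_comp_log (differentiable_cuspProfile a y' t) hy₀
      (hasDerivAt_deriv_cuspProfile a y' t _).differentiableAt, cuspProfile_heat_equation a y' _ ht]
end

section
/- Let a > 0 and let p_a(y, y', t) = (e^{-t/4} / √(4πt)) · (y·y')^{1/2} · ( e^{-(log(y/y'))^2/(4t)} − e^{-(log(y·y'/a^2))^2/(4t)} ) for y, y' ≥ a and t > 0. Then p_a satisfies the initial condition of a heat kernel with respect to the measure y^{-2}dy: for every y' > a and every continuous compactly supported function φ : (a, ∞) → ℝ, the integral ∫_a^∞ p_a(y, y', t) · φ(y) · y^{-2} dy converges to φ(y') as t → 0^+. -/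
open MeasureTheory Filter Topology

-- approximate identity
private lemma gauss_approx_id (ψ : ℝ → ℝ) (hc : Continuous ψ) (hs : HasCompactSupport ψ)
    (x₀ : ℝ) :
    Tendsto (fun t : ℝ => ∫ x, Real.exp (-(x - x₀) ^ 2 / (4 * t)) / Real.sqrt (4 * Real.pi * t) * ψ x)
      (𝓝[>] 0) (𝓝 (ψ x₀)) := by
  obtain ⟨C, hC⟩ := hc.bounded_above_of_compact_support hs
  have hπ : (0:ℝ) < Real.pi := Real.pi_pos
  -- the substituted family
  set G : ℝ → ℝ := fun t => (Real.sqrt Real.pi)⁻¹ *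
      ∫ u, Real.exp (-u ^ 2) * ψ (x₀ + 2 * Real.sqrt t * u) with hG
  have key : ∀ t : ℝ, 0 < t →
      (∫ x, Real.exp (-(x - x₀) ^ 2 / (4 * t)) / Real.sqrt (4 * Real.pi * t) * ψ x) = G t := by
    intro t ht
    set c := 2 * Real.sqrt t with hcdef
    have hc0 : 0 < c := by positivity
    have hcsq : c ^ 2 = 4 * t := by
      rw [hcdef, mul_pow, Real.sq_sqrt ht.le]; ring
    set h : ℝ → ℝ := fun x => Real.exp (-(x - x₀) ^ 2 / (4 * t)) * ψ x with hh
    have step1 : (∫ u, h (c * u + x₀)) = |c⁻¹| • ∫ x, h x := by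
      have := MeasureTheory.Measure.integral_comp_mul_left (fun v => h (v + x₀)) c
      simpa [integral_add_right_eq_self (fun x => h x) x₀] using this
    have step2 : ∀ u : ℝ, h (c * u + x₀) = Real.exp (-u ^ 2) * ψ (x₀ + c * u) := by
      intro u
      have : -(c * u + x₀ - x₀) ^ 2 / (4 * t) = -u ^ 2 := by
        have : (c * u + x₀ - x₀) ^ 2 = (4 * t) * u ^ 2 := by
          rw [add_sub_cancel_right, mul_pow, hcsq]
        rw [this]; field_simp
      simp only [hh]
      rw [this, add_comm (c * u) x₀]
    have hsqrt4 : Real.sqrt (4 * Real.pi * t) = Real.sqrt Real.pi * c := by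
      rw [hcdef]
      rw [show (4 : ℝ) * Real.pi * t = Real.pi * (2 * Real.sqrt t) ^ 2 by
        rw [mul_pow, Real.sq_sqrt ht.le]; ring]
      rw [Real.sqrt_mul hπ.le, Real.sqrt_sq (by positivity)]
    calc (∫ x, Real.exp (-(x - x₀) ^ 2 / (4 * t)) / Real.sqrt (4 * Real.pi * t) * ψ x)
        = (Real.sqrt (4 * Real.pi * t))⁻¹ * ∫ x, h x := by
          rw [← integral_const_mul]
          congr 1; ext x; rw [hh]; ring
      _ = (Real.sqrt (4 * Real.pi * t))⁻¹ * (|c| • ∫ u, h (c * u + x₀)) := by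
          rw [step1, smul_smul]
          congr 1
          rw [abs_inv, mul_inv_cancel₀ (by positivity), one_smul]
      _ = G t := by
          rw [hG]
          simp only [smul_eq_mul, abs_of_pos hc0, hsqrt4]
          rw [mul_inv, ← mul_assoc, mul_assoc (Real.sqrt Real.pi)⁻¹, inv_mul_cancel₀ hc0.ne',
            mul_one]
          congr 1
          exact integral_congr_ae (Eventually.of_forall fun u => step2 u)
  have hlim : Tendsto G (𝓝[>] 0) (𝓝 (ψ x₀)) := by
    have hint : Tendsto (fun t : ℝ => ∫ u, Real.exp (-u ^ 2) * ψ (x₀ + 2 * Real.sqrt t * u))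
        (𝓝[>] 0) (𝓝 (∫ u, Real.exp (-u ^ 2) * ψ x₀)) := by
      apply tendsto_integral_filter_of_dominated_convergence (fun u => Real.exp (-u ^ 2) * C)
      · filter_upwards with t
        exact (Continuous.mul (by continuity) (hc.comp (by continuity))).aestronglyMeasurable
      · filter_upwards with t
        filter_upwards with u
        have h1 : |ψ (x₀ + 2 * Real.sqrt t * u)| ≤ C := hC _
        have h2 : (0:ℝ) ≤ Real.exp (-u ^ 2) := (Real.exp_pos _).le
        calc ‖Real.exp (-u ^ 2) * ψ (x₀ + 2 * Real.sqrt t * u)‖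
            = Real.exp (-u ^ 2) * |ψ (x₀ + 2 * Real.sqrt t * u)| := by
              rw [Real.norm_eq_abs, abs_mul, abs_of_nonneg h2]
          _ ≤ Real.exp (-u ^ 2) * C := by gcongr
      · have : Integrable (fun u : ℝ => Real.exp (-1 * u ^ 2)) := integrable_exp_neg_mul_sq one_pos
        simpa using this.mul_const C
      · filter_upwards with u
        have : Tendsto (fun t : ℝ => x₀ + 2 * Real.sqrt t * u) (𝓝[>] 0) (𝓝 x₀) := by
          have h0 : Tendsto (fun t : ℝ => x₀ + 2 * Real.sqrt t * u) (𝓝 0) (𝓝 x₀) := by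
            have : Continuous fun t : ℝ => x₀ + 2 * Real.sqrt t * u := by continuity
            simpa using this.tendsto 0
          exact h0.mono_left nhdsWithin_le_nhds
        exact ((hc.tendsto x₀).comp this).const_mul _
    have hval : (∫ u, Real.exp (-u ^ 2) * ψ x₀) = Real.sqrt Real.pi * ψ x₀ := by
      rw [integral_mul_const]
      congr 1
      have := integral_gaussian 1
      simpa using this
    rw [hG]
    have := hint.const_mul (Real.sqrt Real.pi)⁻¹
    rw [hval] at this
    simpa [inv_mul_cancel_left₀ (by positivity : (Real.sqrt Real.pi) ≠ 0),
      ← mul_assoc, inv_mul_cancel₀ (show Real.sqrt Real.pi ≠ 0 by positivity)] using this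
  exact hlim.congr' (by filter_upwards [self_mem_nhdsWithin] with t ht using (key t ht).symm) |>.mono_left le_rfl

private lemma gauss_tail (ψ : ℝ → ℝ) (hc : Continuous ψ) (hs : HasCompactSupport ψ)
    (b δ : ℝ) (hδ : 0 < δ) (hsupp : ∀ x ∈ Function.support ψ, δ ≤ |x + b|) :
    Tendsto (fun t : ℝ => ∫ x, Real.exp (-(x + b) ^ 2 / (4 * t)) / Real.sqrt (4 * Real.pi * t) * ψ x)
      (𝓝[>] 0) (𝓝 0) := by
  have hπ : (0:ℝ) < Real.pi := Real.pi_pos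
  have hψ_int : Integrable (fun x => |ψ x|) := (hc.integrable_of_hasCompactSupport hs).abs
  set I : ℝ := ∫ x, |ψ x| with hI
  have hI0 : 0 ≤ I := integral_nonneg fun x => abs_nonneg _
  set K : ℝ → ℝ := fun t => Real.exp (-δ ^ 2 / (4 * t)) / Real.sqrt (4 * Real.pi * t) with hK
  -- K t → 0
  have hKlim : Tendsto K (𝓝[>] 0) (𝓝 0) := by
    have h1 : Tendsto (fun s : ℝ => (Real.sqrt (4 * Real.pi))⁻¹ *
        (s ^ ((1:ℝ)/2) * Real.exp (-(δ ^ 2 / 4) * s))) atTop (𝓝 0) := by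
      have := tendsto_rpow_mul_exp_neg_mul_atTop_nhds_zero ((1:ℝ)/2) (δ ^ 2 / 4) (by positivity)
      simpa using this.const_mul (Real.sqrt (4 * Real.pi))⁻¹
    have h2 := h1.comp tendsto_inv_nhdsGT_zero
    apply h2.congr'
    filter_upwards [self_mem_nhdsWithin] with t (ht : 0 < t)
    show (Real.sqrt (4 * Real.pi))⁻¹ * ((t⁻¹) ^ ((1:ℝ)/2) * Real.exp (-(δ ^ 2 / 4) * t⁻¹)) = K t
    have h3 : (t⁻¹) ^ ((1:ℝ)/2) = (Real.sqrt t)⁻¹ := by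
      rw [← Real.sqrt_eq_rpow, Real.sqrt_inv]
    have h4 : Real.sqrt (4 * Real.pi * t) = Real.sqrt (4 * Real.pi) * Real.sqrt t := by
      rw [Real.sqrt_mul (by positivity)]
    have h5 : -(δ ^ 2 / 4) * t⁻¹ = -δ ^ 2 / (4 * t) := by field_simp
    simp only [hK]
    rw [h3, h4, h5]
    field_simp
  -- squeeze
  apply squeeze_zero_norm' _ (by simpa using hKlim.mul_const I)
  filter_upwards [self_mem_nhdsWithin] with t (ht : 0 < t)
  have hst : 0 < Real.sqrt (4 * Real.pi * t) := Real.sqrt_pos.2 (by positivity)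
  have hbound : ∀ x, ‖Real.exp (-(x + b) ^ 2 / (4 * t)) / Real.sqrt (4 * Real.pi * t) * ψ x‖
      ≤ K t * |ψ x| := by
    intro x
    by_cases hx : ψ x = 0
    · simp [hx]
    · have hxs : δ ≤ |x + b| := hsupp x hx
      have hsq : δ ^ 2 ≤ (x + b) ^ 2 := by
        calc δ ^ 2 ≤ |x + b| ^ 2 := by gcongr
          _ = (x + b) ^ 2 := sq_abs _
      have hexp : Real.exp (-(x + b) ^ 2 / (4 * t)) ≤ Real.exp (-δ ^ 2 / (4 * t)) := by
        apply Real.exp_le_exp.2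
        apply div_le_div_of_nonneg_right ?_ (by positivity) |>.trans_eq rfl
        · linarith
      rw [Real.norm_eq_abs, abs_mul, abs_div, abs_of_pos (Real.exp_pos _),
        abs_of_pos hst]
      simp only [hK]
      gcongr
  calc ‖∫ x, Real.exp (-(x + b) ^ 2 / (4 * t)) / Real.sqrt (4 * Real.pi * t) * ψ x‖
      ≤ ∫ x, K t * |ψ x| := by
        apply norm_integral_le_of_norm_le ((hψ_int.const_mul (K t)))
        exact Eventually.of_forall hbound
    _ = K t * I := by rw [integral_const_mul]


set_option maxHeartbeats 1000000 in
/-- The heat kernel `p_a` satisfies the initial condition with respect to the measure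
`y⁻² dy`: for `y' > a` and any continuous compactly supported `φ` with support in `(a,∞)`,
`∫_a^∞ p_a(y, y', t) φ(y) y⁻² dy → φ(y')` as `t → 0⁺`. -/
theorem cuspHeatKernel_initial_condition (a : ℝ) (ha : 0 < a) (y' : ℝ) (hy' : a < y')
    (φ : ℝ → ℝ) (hφ_cont : Continuous φ) (hφ_supp : HasCompactSupport φ)
    (hφ_sub : Function.support φ ⊆ Set.Ioi a) :
    Tendsto (fun t : ℝ => ∫ y in Set.Ioi a, cuspHeatKernel a y y' t * φ y / y ^ 2)
      (𝓝[>] 0) (𝓝 (φ y')) := by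
  have hy'0 : 0 < y' := ha.trans hy'
  set la := Real.log a with hla
  set lx := Real.log y' with hlx
  set ψ : ℝ → ℝ := fun x => Real.exp ((lx - x) / 2) * φ (Real.exp x) with hψ
  have hψc : Continuous ψ :=
    (Real.continuous_exp.comp ((continuous_const.sub continuous_id).div_const 2)).mul
      (hφ_cont.comp Real.continuous_exp)
  have hψsupp : ∀ x : ℝ, ψ x ≠ 0 → la < x := by
    intro x hx
    have hφx : φ (Real.exp x) ≠ 0 := fun h => hx (by simp [hψ, h])
    have h1 : a < Real.exp x := hφ_sub hφx
    have h2 := Real.log_lt_log ha h1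
    rwa [Real.log_exp] at h2
  obtain ⟨R, hR⟩ := hφ_supp.isBounded.subset_closedBall 0
  have hψs : HasCompactSupport ψ := by
    apply HasCompactSupport.intro (isCompact_Icc (a := la) (b := Real.log R))
    intro x hx
    by_contra hne
    apply hx
    have hφx : φ (Real.exp x) ≠ 0 := fun h => hne (by simp [hψ, h])
    have h1 : Real.exp x ∈ Metric.closedBall 0 R := hR (subset_tsupport φ hφx)
    have h2 : Real.exp x ≤ R := by
      have := mem_closedBall_zero_iff.1 h1
      rwa [Real.norm_eq_abs, abs_of_pos (Real.exp_pos x)] at this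
    have hR0 : 0 < R := (Real.exp_pos x).trans_le h2
    exact ⟨(hψsupp x hne).le, (Real.le_log_iff_exp_le hR0).2 h2⟩
  have himg : Set.Ioi a = Real.exp '' Set.Ioi la := by
    ext z
    simp only [Set.mem_Ioi, Set.mem_image]
    constructor
    · intro hz
      exact ⟨Real.log z, Real.log_lt_log ha hz, Real.exp_log (ha.trans hz)⟩
    · rintro ⟨x, hx, rfl⟩
      have := Real.exp_lt_exp.2 hx
      rwa [Real.exp_log ha] at this
  have key : ∀ t : ℝ, 0 < t →
      (∫ y in Set.Ioi a, cuspHeatKernel a y y' t * φ y / y ^ 2)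
        = Real.exp (-t / 4) *
          ((∫ x, Real.exp (-(x - lx) ^ 2 / (4 * t)) / Real.sqrt (4 * Real.pi * t) * ψ x)
            - ∫ x, Real.exp (-(x + (lx - 2 * la)) ^ 2 / (4 * t)) /
                Real.sqrt (4 * Real.pi * t) * ψ x) := by
    intro t ht
    have hst : (0:ℝ) < Real.sqrt (4 * Real.pi * t) := Real.sqrt_pos.2 (by positivity)
    have hpt : ∀ x : ℝ,
        |Real.exp x| • (cuspHeatKernel a (Real.exp x) y' t * φ (Real.exp x) / Real.exp x ^ 2)
          = Real.exp (-t / 4) *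
            (Real.exp (-(x - lx) ^ 2 / (4 * t)) / Real.sqrt (4 * Real.pi * t) * ψ x
              - Real.exp (-(x + (lx - 2 * la)) ^ 2 / (4 * t)) /
                  Real.sqrt (4 * Real.pi * t) * ψ x) := by
      intro x
      have e1 : Real.log (Real.exp x / y') = x - lx := by
        rw [Real.log_div (Real.exp_ne_zero x) hy'0.ne', Real.log_exp]
      have e2 : Real.log (Real.exp x * y' / a ^ 2) = x + (lx - 2 * la) := by
        rw [Real.log_div (by positivity) (by positivity),
          Real.log_mul (Real.exp_ne_zero x) hy'0.ne', Real.log_exp, Real.log_pow]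
        push_cast; ring
      have e3 : Real.sqrt (Real.exp x * y') = Real.exp ((x + lx) / 2) := by
        have h4 : Real.exp x * y' = Real.exp ((x + lx) / 2) ^ 2 := by
          rw [sq, ← Real.exp_add, ← Real.exp_log hy'0, ← Real.exp_add]
          congr 1; ring
        rw [h4, Real.sqrt_sq (Real.exp_pos _).le]
      have e4 : Real.exp x * Real.exp ((x + lx) / 2) / Real.exp x ^ 2
          = Real.exp ((lx - x) / 2) := by
        rw [sq, mul_div_mul_left _ _ (Real.exp_ne_zero x), ← Real.exp_sub]
        congr 1; ring
      rw [smul_eq_mul, abs_of_pos (Real.exp_pos x)]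
      simp only [cuspHeatKernel, e1, e2, e3, hψ]
      calc Real.exp x * (Real.exp (-t / 4) / Real.sqrt (4 * Real.pi * t) *
              Real.exp ((x + lx) / 2) *
              (Real.exp (-(x - lx) ^ 2 / (4 * t)) -
                Real.exp (-(x + (lx - 2 * la)) ^ 2 / (4 * t))) *
              φ (Real.exp x) / Real.exp x ^ 2)
          = Real.exp (-t / 4) / Real.sqrt (4 * Real.pi * t) *
              (Real.exp (-(x - lx) ^ 2 / (4 * t)) -
                Real.exp (-(x + (lx - 2 * la)) ^ 2 / (4 * t))) *
              φ (Real.exp x) *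
              (Real.exp x * Real.exp ((x + lx) / 2) / Real.exp x ^ 2) := by ring
        _ = _ := by rw [e4]; ring
    have hF1int : Integrable fun x =>
        Real.exp (-(x - lx) ^ 2 / (4 * t)) / Real.sqrt (4 * Real.pi * t) * ψ x := by
      apply Continuous.integrable_of_hasCompactSupport
      · exact ((Real.continuous_exp.comp
            (((continuous_id.sub continuous_const).pow 2).neg.div_const _)).div_const _).mul hψc
      · exact hψs.mul_left
    have hF2int : Integrable fun x =>
        Real.exp (-(x + (lx - 2 * la)) ^ 2 / (4 * t)) / Real.sqrt (4 * Real.pi * t) * ψ x := by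
      apply Continuous.integrable_of_hasCompactSupport
      · exact ((Real.continuous_exp.comp
            (((continuous_id.add continuous_const).pow 2).neg.div_const _)).div_const _).mul hψc
      · exact hψs.mul_left
    rw [himg, MeasureTheory.integral_image_eq_integral_abs_deriv_smul measurableSet_Ioi
      (fun x _ => (Real.hasDerivAt_exp x).hasDerivWithinAt) Real.exp_injective.injOn]
    simp only [hpt]
    rw [MeasureTheory.setIntegral_eq_integral_of_forall_compl_eq_zero (fun x hx => ?_)]
    · rw [MeasureTheory.integral_const_mul]
      congr 1
      exact integral_sub hF1int hF2int
    · have hx0 : ψ x = 0 := by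
        by_contra h; exact hx (hψsupp x h)
      simp [hx0]
  -- convergence of the pieces
  have hA := gauss_approx_id ψ hψc hψs lx
  have hψlx : ψ lx = φ y' := by simp [hψ, hlx, Real.exp_log hy'0]
  have hδ : (0:ℝ) < lx - la := sub_pos.2 (Real.log_lt_log ha hy')
  have hB := gauss_tail ψ hψc hψs (lx - 2 * la) (lx - la) hδ (fun x hx => by
    have h1 : la < x := hψsupp x hx
    calc lx - la ≤ x + (lx - 2 * la) := by linarith
      _ ≤ |x + (lx - 2 * la)| := le_abs_self _)
  have hexp : Tendsto (fun t : ℝ => Real.exp (-t / 4)) (𝓝[>] 0) (𝓝 1) := by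
    have hcont : Continuous fun t : ℝ => Real.exp (-t / 4) :=
      Real.continuous_exp.comp (continuous_neg.div_const 4)
    have h0 := hcont.tendsto 0
    simp only [neg_zero, zero_div, Real.exp_zero] at h0
    exact h0.mono_left nhdsWithin_le_nhds
  have hmain := hexp.mul (hA.sub hB)
  rw [hψlx, sub_zero, one_mul] at hmain
  exact hmain.congr' (by
    filter_upwards [self_mem_nhdsWithin] with t (ht : 0 < t) using (key t ht).symm)
end

section
/- Fix a real number s > 0. Then there exist constants C > 0 and ℓ₀ > 0 such that for all 0 < ℓ < ℓ₀, the series Σ_{n=1}^∞ e^{-n s ℓ} / ( n (1 − e^{-n ℓ}) ) converges and | Σ_{n=1}^∞ e^{-n s ℓ} / ( n (1 − e^{-n ℓ}) ) − π²/(6ℓ) − (s − 1/2) · log(1 − e^{-s ℓ}) | ≤ C. -/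
/-!
Write `m = n + 1` and `t = sℓ`. Expanding `1 / (1 - e^{-x}) = 1/x + 1/2 + O(x)` at `x = mℓ` splits
the `m`-th term into `1/(m²ℓ) - (s - 1/2) e^{-mt}/m` plus an error. The two main pieces sum exactly
to `π²/(6ℓ) + (s - 1/2) log(1 - e^{-t})`, by `ζ(2) = π²/6` and `Σ q^m/m = -log(1 - q)`. The error is
`e^{-mt} O(mℓ)/m - (1 - (1 + mt) e^{-mt})/(m²ℓ)`: its first part sums to `O(ℓ/t) = O(1/s)`, and since
`0 ≤ 1 - (1 + x) e^{-x} ≤ min(1, x²)` its second part is at most `Σ min(t², 1/m²)/ℓ ≤ 3t/ℓ = 3s`,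
as one sees by splitting the sum at `m ≈ 1/t`.
-/

open Real Finset

namespace SelbergSeries

lemma one_add_mul_exp_neg_le_one (x : ℝ) : (1 + x) * exp (-x) ≤ 1 := by
  rw [exp_neg, ← div_eq_mul_inv, div_le_one (exp_pos x)]
  linarith [add_one_le_exp x]

lemma one_sub_one_add_mul_exp_neg_le {x : ℝ} (hx : 0 ≤ x) :
    1 - (1 + x) * exp (-x) ≤ min 1 (x ^ 2) :=
  le_min (by linarith [mul_nonneg (by linarith : 0 ≤ 1 + x) (exp_pos (-x)).le])
    (by nlinarith [one_sub_le_exp_neg x])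

lemma abs_exp_sub_one_sub_id_sub_sq_div_two_le {x : ℝ} (hx : |x| ≤ 1) :
    |exp x - (1 + x + x ^ 2 / 2)| ≤ 2 / 9 * |x| ^ 3 := by
  have h := exp_bound hx (n := 3) (by norm_num)
  norm_num [sum_range_succ, Nat.factorial] at h
  linarith

/-- `1 / (1 - e^{-x}) = 1 / x + 1 / 2 + bernoulliRemainder x`; by the Bernoulli expansion,
`bernoulliRemainder x = x / 12 + O(x ^ 3)` as `x → 0`. -/
noncomputable def bernoulliRemainder (x : ℝ) : ℝ := (1 - exp (-x))⁻¹ - x⁻¹ - 1 / 2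

lemma bernoulliRemainder_eq {x : ℝ} (hx : 0 < x) :
    bernoulliRemainder x = (x - 2 + (2 + x) * exp (-x)) / (2 * x * (1 - exp (-x))) := by
  have : 0 < 1 - exp (-x) := by simpa using hx
  rw [bernoulliRemainder]
  field_simp
  ring

lemma abs_bernoulliRemainder_le {x : ℝ} (hx : 0 < x) : |bernoulliRemainder x| ≤ 2 * x := by
  set E := exp (-x)
  have hE : 0 < E := exp_pos _
  have hE1 : (1 + x) * E ≤ 1 := one_add_mul_exp_neg_le_one x
  have hD : 0 < 2 * x * (1 - E) := mul_pos (by positivity) (by simpa [E] using hx)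
  rw [bernoulliRemainder_eq hx, abs_div, abs_of_pos hD, div_le_iff₀ hD]
  rcases le_or_gt x 1 with hx1 | hx1
  · -- the numerator is `x ^ 3 / 2 + (2 + x) * (E - (1 - x + x ^ 2 / 2))`, so third-order
    -- Taylor expansion of `E` bounds it by `O(x ^ 3)`
    have hT := abs_exp_sub_one_sub_id_sub_sq_div_two_le (x := -x)
      (by rwa [abs_neg, abs_of_pos hx])
    rw [abs_neg, abs_of_pos hx, abs_le] at hT
    have hN : |x - 2 + (2 + x) * E| ≤ 7 / 6 * x ^ 3 := by
      rw [abs_le]; constructor <;> nlinarith [hT.1, hT.2, pow_pos hx 3]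
    have h1E : x / 2 ≤ 1 - E := by nlinarith
    nlinarith [pow_pos hx 3]
  · have hN : |x - 2 + (2 + x) * E| ≤ x * (1 - E) := by
      rw [abs_le]; constructor <;> nlinarith
    nlinarith

lemma sum_range_min_sq_inv_sq_le {t : ℝ} (ht : 0 < t) (M : ℕ) :
    ∑ n ∈ range M, min (t ^ 2) (((n : ℝ) + 1) ^ 2)⁻¹ ≤ 3 * t := by
  set f : ℕ → ℝ := fun n => min (t ^ 2) (((n : ℝ) + 1) ^ 2)⁻¹
  set N := ⌊t⁻¹⌋₊
  have hf : ∀ n, 0 ≤ f n := fun n => le_min (by positivity) (by positivity)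
  have head : ∑ n ∈ range N, f n ≤ t := calc
    _ ≤ ∑ _n ∈ range N, t ^ 2 := sum_le_sum fun n _ => min_le_left _ _
    _ = N * t ^ 2 := by simp
    _ ≤ t⁻¹ * t ^ 2 := by gcongr; exact Nat.floor_le (by positivity)
    _ = t := by field_simp
  have tail (K : ℕ) : ∑ n ∈ Ico N K, f n ≤ 2 * t := calc
    _ ≤ ∑ n ∈ Ico N K, (((n + 1 : ℕ) : ℝ) ^ 2)⁻¹ :=
      sum_le_sum fun n _ => by push_cast; exact min_le_right _ _
    _ = ∑ i ∈ Ioo N (K + 1), ((i : ℝ) ^ 2)⁻¹ := by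
      rw [sum_Ico_add' (fun i : ℕ => ((i : ℝ) ^ 2)⁻¹), Finset.Ico_add_one_left_eq_Ioo]
    _ ≤ 2 / (N + 1) := sum_Ioo_inv_sq_le _ _
    _ ≤ 2 * t := by
      have : 1 ≤ t * (N + 1) := (inv_le_iff_one_le_mul₀' ht).mp (Nat.lt_floor_add_one _).le
      rw [div_le_iff₀ (by positivity)]
      linarith
  calc ∑ n ∈ range M, f n
      ≤ ∑ n ∈ range (max N M), f n :=
        sum_le_sum_of_subset_of_nonneg (range_mono (le_max_right _ _)) fun n _ _ => hf n
    _ = ∑ n ∈ range N, f n + ∑ n ∈ Ico N (max N M), f n :=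
        (sum_range_add_sum_Ico _ (le_max_left _ _)).symm
    _ ≤ 3 * t := by linarith [tail (max N M)]

lemma summable_min_sq_inv_sq {t : ℝ} (ht : 0 < t) :
    Summable fun n : ℕ => min (t ^ 2) (((n : ℝ) + 1) ^ 2)⁻¹ :=
  summable_of_sum_range_le (fun _ => le_min (by positivity) (by positivity))
    (sum_range_min_sq_inv_sq_le ht)

lemma tsum_min_sq_inv_sq_le {t : ℝ} (ht : 0 < t) :
    ∑' n : ℕ, min (t ^ 2) (((n : ℝ) + 1) ^ 2)⁻¹ ≤ 3 * t :=
  Real.tsum_le_of_sum_range_le (fun _ => le_min (by positivity) (by positivity))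
    (sum_range_min_sq_inv_sq_le ht)

lemma exp_neg_succ_mul (t : ℝ) (n : ℕ) : exp (-((n : ℝ) + 1) * t) = exp (-t) ^ (n + 1) := by
  rw [← exp_nat_mul]
  push_cast
  ring_nf

lemma hasSum_exp_neg_succ_mul {t : ℝ} (ht : 0 < t) :
    HasSum (fun n : ℕ => exp (-((n : ℝ) + 1) * t)) (exp t - 1)⁻¹ := by
  have hq : exp (-t) < 1 := by simpa using ht
  have hsum : exp (-t) * (1 - exp (-t))⁻¹ = (exp t - 1)⁻¹ := by
    have : exp t - 1 ≠ 0 := by linarith [add_one_lt_exp ht.ne']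
    rw [exp_neg]
    field_simp
  rw [← hsum]
  exact ((hasSum_geometric_of_lt_one (exp_pos _).le hq).mul_left (exp (-t))).congr_fun
    fun n => by rw [exp_neg_succ_mul, pow_succ']

lemma hasSum_exp_neg_succ_mul_div {t : ℝ} (ht : 0 < t) :
    HasSum (fun n : ℕ => exp (-((n : ℝ) + 1) * t) / ((n : ℝ) + 1)) (-log (1 - exp (-t))) := by
  simp_rw [exp_neg_succ_mul]
  exact hasSum_pow_div_log_of_abs_lt_one (by rw [abs_of_pos (exp_pos _)]; simpa using ht)

lemma hasSum_inv_succ_sq : HasSum (fun n : ℕ => 1 / ((n : ℝ) + 1) ^ 2) (π ^ 2 / 6) := by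
  simpa using (hasSum_nat_add_iff' 1).mpr hasSum_zeta_two

noncomputable def selbergTerm (s ℓ m : ℝ) : ℝ := exp (-m * s * ℓ) / (m * (1 - exp (-m * ℓ)))

lemma selbergTerm_sub_eq {s ℓ m : ℝ} (hℓ : 0 < ℓ) (hm : 0 < m) :
    selbergTerm s ℓ m - 1 / m ^ 2 / ℓ + (s - 1 / 2) * (exp (-m * s * ℓ) / m) =
      exp (-m * s * ℓ) * bernoulliRemainder (m * ℓ) / m
        - (1 - (1 + m * s * ℓ) * exp (-(m * s * ℓ))) / m ^ 2 / ℓ := by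
  have : 0 < 1 - exp (-(m * ℓ)) := by simpa using mul_pos hm hℓ
  rw [selbergTerm, bernoulliRemainder, neg_mul, neg_mul, neg_mul]
  field_simp
  ring

lemma abs_selbergTerm_sub_le {s ℓ m : ℝ} (hs : 0 ≤ s) (hℓ : 0 < ℓ) (hm : 0 < m) :
    |selbergTerm s ℓ m - 1 / m ^ 2 / ℓ + (s - 1 / 2) * (exp (-m * s * ℓ) / m)| ≤
      2 * ℓ * exp (-m * s * ℓ) + min ((s * ℓ) ^ 2) (m ^ 2)⁻¹ / ℓ := by
  rw [selbergTerm_sub_eq hℓ hm]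
  refine (abs_sub _ _).trans (add_le_add ?_ ?_)
  · rw [abs_div, abs_mul, abs_of_pos (exp_pos _), abs_of_pos hm, mul_div_assoc,
      mul_comm (2 * ℓ)]
    gcongr
    rw [div_le_iff₀ hm]
    linarith [abs_bernoulliRemainder_le (mul_pos hm hℓ)]
  · have hx : 0 ≤ m * s * ℓ := by positivity
    have hF := one_sub_one_add_mul_exp_neg_le hx
    have hF0 : 0 ≤ 1 - (1 + m * s * ℓ) * exp (-(m * s * ℓ)) := by
      linarith [one_add_mul_exp_neg_le_one (m * s * ℓ)]
    rw [abs_div, abs_div, abs_of_nonneg hF0, abs_of_pos hℓ, abs_of_pos (by positivity)]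
    gcongr
    refine le_min ?_ ?_ <;> rw [div_le_iff₀ (by positivity)]
    · calc _ ≤ (m * s * ℓ) ^ 2 := hF.trans (min_le_right _ _)
        _ = (s * ℓ) ^ 2 * m ^ 2 := by ring
    · rw [inv_mul_cancel₀ (by positivity)]
      exact hF.trans (min_le_left _ _)

lemma summable_and_abs_tsum_le_of_abs_le {s ℓ : ℝ} (hs : 0 < s) (hℓ : 0 < ℓ) {f : ℕ → ℝ}
    (hf : ∀ n : ℕ, |f n| ≤ 2 * ℓ * exp (-((n : ℝ) + 1) * s * ℓ)
      + min ((s * ℓ) ^ 2) (((n : ℝ) + 1) ^ 2)⁻¹ / ℓ) :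
    Summable f ∧ |∑' n, f n| ≤ 3 * s + 2 / s := by
  have ht : 0 < s * ℓ := mul_pos hs hℓ
  simp only [mul_assoc _ s ℓ] at hf
  have hexp := (hasSum_exp_neg_succ_mul ht).mul_left (2 * ℓ)
  have hmin := (summable_min_sq_inv_sq ht).div_const ℓ
  have hg := hexp.add hmin.hasSum
  refine ⟨.of_norm_bounded hg.summable hf, ?_⟩
  rw [← Real.norm_eq_abs]
  refine (tsum_of_norm_bounded hg hf).trans ?_
  have hexp_le : (exp (s * ℓ) - 1)⁻¹ ≤ (s * ℓ)⁻¹ :=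
    inv_anti₀ ht (by linarith [add_one_le_exp (s * ℓ)])
  calc 2 * ℓ * (exp (s * ℓ) - 1)⁻¹ + ∑' n : ℕ, min ((s * ℓ) ^ 2) (((n : ℝ) + 1) ^ 2)⁻¹ / ℓ
      ≤ 2 * ℓ * (s * ℓ)⁻¹ + 3 * (s * ℓ) / ℓ := by
        rw [tsum_div_const]
        gcongr
        exact tsum_min_sq_inv_sq_le ht
    _ = 3 * s + 2 / s := by field_simp; ring

end SelbergSeries

open SelbergSeries in
/-- Wolpert's estimate: for fixed `s > 0`, as `ℓ → 0⁺`,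
`Σ_{n≥1} e^{-nsℓ}/(n(1−e^{-nℓ})) = π²/(6ℓ) + (s − 1/2) log(1 − e^{-sℓ}) + O(1)`. -/
theorem selberg_series_small_length_expansion (s : ℝ) (hs : 0 < s) :
    ∃ C > (0 : ℝ), ∃ ℓ₀ > (0 : ℝ), ∀ ℓ : ℝ, 0 < ℓ → ℓ < ℓ₀ →
      Summable (fun n : ℕ => Real.exp (-((n : ℝ) + 1) * s * ℓ) /
        (((n : ℝ) + 1) * (1 - Real.exp (-((n : ℝ) + 1) * ℓ)))) ∧
      |(∑' n : ℕ, Real.exp (-((n : ℝ) + 1) * s * ℓ) /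
          (((n : ℝ) + 1) * (1 - Real.exp (-((n : ℝ) + 1) * ℓ))))
        - Real.pi ^ 2 / (6 * ℓ)
        - (s - 1 / 2) * Real.log (1 - Real.exp (-s * ℓ))| ≤ C := by
  refine ⟨3 * s + 2 / s, by positivity, 1, one_pos, fun ℓ hℓ _ => ?_⟩
  set R : ℕ → ℝ := fun n => selbergTerm s ℓ (n + 1) - 1 / ((n : ℝ) + 1) ^ 2 / ℓ
    + (s - 1 / 2) * (exp (-((n : ℝ) + 1) * s * ℓ) / ((n : ℝ) + 1))
  obtain ⟨hR, hR_le⟩ := summable_and_abs_tsum_le_of_abs_le hs hℓ (f := R)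
    fun n => abs_selbergTerm_sub_le hs.le hℓ n.cast_add_one_pos
  have hT : HasSum (fun n : ℕ => selbergTerm s ℓ (n + 1))
      (π ^ 2 / 6 / ℓ + (s - 1 / 2) * log (1 - exp (-s * ℓ)) + ∑' n, R n) := by
    have hlog := (hasSum_exp_neg_succ_mul_div (mul_pos hs hℓ)).mul_left (s - 1 / 2)
    simp only [← mul_assoc, ← neg_mul] at hlog
    have h := ((hasSum_inv_succ_sq.div_const ℓ).sub hlog).add hR.hasSum
    rw [mul_neg, sub_neg_eq_add] at h
    exact h.congr_fun fun n => by simp only [R]; ring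
  simp only [selbergTerm] at hT
  refine ⟨hT.summable, ?_⟩
  rw [hT.tsum_eq]
  convert hR_le using 2
  ring
end
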